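/- If each f_i : E → ℝ is differentiable, convex, and L-smooth, then for every s ∈ {1,…,n}, every subset S ⊆ {1,…,n} with |S| = s, and all x, y ∈ E: (1/s)Σ_{i∈S} ‖∇h_i^S(x) − ∇h_i^S(y)‖² ≤ L²‖x − y‖²; that is, {f_i} have δ_s-SOD of size s with δ_s = L. -/

import Mathlib

open Finset RealInnerProductSpace

/-!
The gradient of `h_i^S = f_S - f_i` at `x` minus that at `y` is `m - v_i`, where
`v_i = ∇f_i(x) - ∇f_i(y)` and `m` is the average of the `v_j` over `S`. The mean squared
deviation from the average is at most the mean square (`(1/s) Σ ‖m - v_i‖² = (1/s) Σ ‖v_i‖² - ‖m‖²`),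
and each `‖v_i‖ ≤ L ‖x - y‖` by smoothness.
-/

section Gradient

variable {E : Type*} [NormedAddCommGroup E] [InnerProductSpace ℝ E] [CompleteSpace E]
  {f g : E → ℝ} {x : E}

theorem gradient_fun_sub (hf : DifferentiableAt ℝ f x) (hg : DifferentiableAt ℝ g x) :
    gradient (fun z => f z - g z) x = gradient f x - gradient g x := by
  simp only [gradient, fderiv_fun_sub hf hg, map_sub]

theorem gradient_const_mul (c : ℝ) (hf : DifferentiableAt ℝ f x) :
    gradient (fun z => c * f z) x = c • gradient f x := by
  simp only [gradient, fderiv_const_mul hf, map_smul]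

theorem gradient_fun_sum {ι : Type*} (S : Finset ι) {F : ι → E → ℝ}
    (hF : ∀ i ∈ S, DifferentiableAt ℝ (F i) x) :
    gradient (fun z => ∑ i ∈ S, F i z) x = ∑ i ∈ S, gradient (F i) x := by
  simp only [gradient, fderiv_fun_sum hF, map_sum]

end Gradient

section Variance

variable {E ι : Type*} [NormedAddCommGroup E] [InnerProductSpace ℝ E]

theorem sum_norm_average_sub_sq (S : Finset ι) (v : ι → E) :
    ∑ i ∈ S, ‖(#S : ℝ)⁻¹ • ∑ j ∈ S, v j - v i‖ ^ 2
      = ∑ i ∈ S, ‖v i‖ ^ 2 - #S * ‖(#S : ℝ)⁻¹ • ∑ j ∈ S, v j‖ ^ 2 := by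
  set m := (#S : ℝ)⁻¹ • ∑ j ∈ S, v j
  have hsum : ∑ j ∈ S, v j = (#S : ℝ) • m := by
    rcases eq_or_ne (#S : ℝ) 0 with hS | hS
    · simp [Finset.card_eq_zero.mp (by exact_mod_cast hS)]
    · exact (smul_inv_smul₀ hS _).symm
  calc ∑ i ∈ S, ‖m - v i‖ ^ 2
      = ∑ i ∈ S, (‖m‖ ^ 2 - 2 * ⟪m, v i⟫ + ‖v i‖ ^ 2) := by
        simp only [norm_sub_sq_real]
    _ = #S * ‖m‖ ^ 2 - 2 * ⟪m, ∑ j ∈ S, v j⟫ + ∑ i ∈ S, ‖v i‖ ^ 2 := by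
        rw [sum_add_distrib, sum_sub_distrib, sum_const, nsmul_eq_mul, ← mul_sum, inner_sum]
    _ = ∑ i ∈ S, ‖v i‖ ^ 2 - #S * ‖m‖ ^ 2 := by
        rw [hsum, real_inner_smul_right, real_inner_self_eq_norm_sq]
        ring

theorem sum_norm_average_sub_sq_le (S : Finset ι) (v : ι → E) :
    ∑ i ∈ S, ‖(#S : ℝ)⁻¹ • ∑ j ∈ S, v j - v i‖ ^ 2 ≤ ∑ i ∈ S, ‖v i‖ ^ 2 := by
  rw [sum_norm_average_sub_sq]
  have : 0 ≤ (#S : ℝ) * ‖(#S : ℝ)⁻¹ • ∑ j ∈ S, v j‖ ^ 2 := by positivity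
  linarith

end Variance

theorem convex_smooth_implies_SOD_L_general
    {E : Type*} [NormedAddCommGroup E] [InnerProductSpace ℝ E] [CompleteSpace E]
    (n : ℕ)
    (f' : Fin n → E → ℝ) (hdiff : ∀ i, Differentiable ℝ (f' i))
    (L : ℝ)
    (hsmooth : ∀ i, ∀ x y : E,
      ‖gradient (f' i) x - gradient (f' i) y‖ ≤ L * ‖x - y‖) :
    ∀ s : ℕ, 1 ≤ s → s ≤ n → ∀ S : Finset (Fin n), S.card = s → ∀ x y : E,
      (1 / (s : ℝ)) * ∑ i ∈ S,
          ‖gradient (fun z => (1 / (s : ℝ)) * (∑ j ∈ S, f' j z) - f' i z) x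
            - gradient (fun z => (1 / (s : ℝ)) * (∑ j ∈ S, f' j z) - f' i z) y‖ ^ 2
        ≤ L ^ 2 * ‖x - y‖ ^ 2 := by
  rintro s hs - S rfl x y
  set v : Fin n → E := fun i => gradient (f' i) x - gradient (f' i) y
  have hgrad : ∀ i z, gradient (fun z => (1 / (#S : ℝ)) * (∑ j ∈ S, f' j z) - f' i z) z
      = (#S : ℝ)⁻¹ • ∑ j ∈ S, gradient (f' j) z - gradient (f' i) z := fun i z => by
    rw [gradient_fun_sub (by fun_prop) (hdiff i z), one_div,
      gradient_const_mul _ (by fun_prop), gradient_fun_sum S fun j _ => hdiff j z]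
  have hdev : ∀ i, gradient (fun z => (1 / (#S : ℝ)) * (∑ j ∈ S, f' j z) - f' i z) x
      - gradient (fun z => (1 / (#S : ℝ)) * (∑ j ∈ S, f' j z) - f' i z) y
      = (#S : ℝ)⁻¹ • ∑ j ∈ S, v j - v i := fun i => by
    simp only [hgrad, v, sum_sub_distrib, smul_sub]
    abel
  have hS : (#S : ℝ) ≠ 0 := by positivity
  simp only [hdev]
  calc (1 / (#S : ℝ)) * ∑ i ∈ S, ‖(#S : ℝ)⁻¹ • ∑ j ∈ S, v j - v i‖ ^ 2
      ≤ (1 / (#S : ℝ)) * ∑ i ∈ S, ‖v i‖ ^ 2 := by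
        gcongr (1 / (#S : ℝ)) * ?_
        exact sum_norm_average_sub_sq_le S v
    _ ≤ (1 / (#S : ℝ)) * ∑ _i ∈ S, (L * ‖x - y‖) ^ 2 := by
        gcongr with i
        exact hsmooth i x y
    _ = L ^ 2 * ‖x - y‖ ^ 2 := by
        rw [sum_const, nsmul_eq_mul]
        field_simp

/-- Convex `L`-smooth individual functions have `δ_s`-SOD of size `s` with `δ_s = L`. -/
theorem convex_smooth_implies_SOD_L
    {E : Type*} [NormedAddCommGroup E] [InnerProductSpace ℝ E] [CompleteSpace E]
    (n : ℕ) (hn : 0 < n)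
    (f' : Fin n → E → ℝ) (hdiff : ∀ i, Differentiable ℝ (f' i))
    (hconv : ∀ i, ∀ x y : E, f' i y ≥ f' i x + ⟪gradient (f' i) x, y - x⟫)
    (L : ℝ) (hL : 0 < L)
    (hsmooth : ∀ i, ∀ x y : E,
      ‖gradient (f' i) x - gradient (f' i) y‖ ≤ L * ‖x - y‖) :
    ∀ s : ℕ, 1 ≤ s → s ≤ n → ∀ S : Finset (Fin n), S.card = s → ∀ x y : E,
      (1 / (s : ℝ)) * ∑ i ∈ S,
          ‖gradient (fun z => (1 / (s : ℝ)) * (∑ j ∈ S, f' j z) - f' i z) x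
            - gradient (fun z => (1 / (s : ℝ)) * (∑ j ∈ S, f' j z) - f' i z) y‖ ^ 2
        ≤ L ^ 2 * ‖x - y‖ ^ 2 :=
  convex_smooth_implies_SOD_L_general n f' hdiff L hsmooth
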